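/- arXiv:1603.07883 — 5 statements merged into one kernel-verified Lean document; each statement's English description precedes it below -/
import Mathlib

section
/- Let 1 ≤ j ≤ k−1 be integers and let H = (V,E1,E2) be a finite double k-graph. For every positive integer N ≤ binom(|V|,j)/binom(k,j), if H j-percolates, then H contains an internally spanned triple of size ℓ for some ℓ with N ≤ ℓ ≤ binom(k,j)·N; that is, there exist J0 ⊆ V^{(j)}, F1 ⊆ E1, F2 ⊆ E2 with N ≤ |J0| ≤ binom(k,j)·N such that (J0,F1,F2) is internally spanned. -/
open Finset Filter

/-- Two clusters `C`, `C'` of `j`-sets can be merged: they are joined by an edge of `E1` (red)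
and an edge of `E2` (blue). -/
def Mergeable {V : Type*} [DecidableEq V] (E1 E2 C C' : Finset (Finset V)) : Prop :=
  (∃ J1 ∈ C, ∃ J1' ∈ C', ∃ e1 ∈ E1, J1 ∪ J1' ⊆ e1) ∧
  (∃ J2 ∈ C, ∃ J2' ∈ C', ∃ e2 ∈ E2, J2 ∪ J2' ⊆ e2)

/-- One elementary merging step of the jigsaw percolation process on the double hypergraph
`(V, E1, E2)`: two distinct mergeable clusters of the current partition `P` are replaced by
their union.  Iterating such pairwise merges as long as possible yields exactly the final
partition of the (deterministic) jigsaw percolation process. -/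
def MergeStep {V : Type*} [DecidableEq V] (E1 E2 : Finset (Finset V))
    (P P' : Finset (Finset (Finset V))) : Prop :=
  ∃ C ∈ P, ∃ C' ∈ P, C ≠ C' ∧ Mergeable E1 E2 C C' ∧
    P' = insert (C ∪ C') ((P.erase C).erase C')

/-- The family `J0` of `j`-sets percolates on the double hypergraph `(V, E1, E2)`:
starting from the partition of `J0` into singletons, a sequence of merges reaches the
partition with a single class. -/
def PercolatesOn {V : Type*} [DecidableEq V] (J0 E1 E2 : Finset (Finset V)) : Prop :=
  Relation.ReflTransGen (MergeStep E1 E2)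
    (J0.image fun J => ({J} : Finset (Finset V))) {J0}

/-- The double `k`-graph `(V, E1, E2)` `j`-percolates: the family of all `j`-element subsets
of `V` percolates on `(V, E1, E2)`. -/
def JPercolates {V : Type*} [DecidableEq V] [Fintype V] (j : ℕ)
    (E1 E2 : Finset (Finset V)) : Prop :=
  PercolatesOn ((Finset.univ : Finset V).powersetCard j) E1 E2

lemma mergeStep_lift {V : Type*} [DecidableEq V] (E1 E2 : Finset (Finset V))
    (C0 : Finset (Finset V)) (R : Finset (Finset (Finset V)))
    (hR : ∀ D ∈ R, ¬ D ⊆ C0) :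
    ∀ P Q, Relation.ReflTransGen (MergeStep E1 E2) P Q →
      (∀ S ∈ P, S.Nonempty ∧ S ⊆ C0) →
      Relation.ReflTransGen (MergeStep E1 E2) (P ∪ R) (Q ∪ R) := by
  intro P Q h
  induction h using Relation.ReflTransGen.head_induction_on with
  | refl => intro _; exact .refl
  | head hstep htail ih =>
    intro hP
    obtain ⟨C, hC, C', hC', hne, hm, rfl⟩ := hstep
    have hCn : C ∉ R := fun hh => hR C hh (hP C hC).2
    have hC'n : C' ∉ R := fun hh => hR C' hh (hP C' hC').2
    refine Relation.ReflTransGen.head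
      ⟨C, Finset.mem_union_left _ hC, C', Finset.mem_union_left _ hC', hne, hm, ?_⟩ (ih ?_)
    · rw [Finset.erase_union_distrib, Finset.erase_union_distrib,
        Finset.erase_eq_of_notMem hCn, Finset.erase_eq_of_notMem hC'n,
        Finset.insert_union]
    · intro S hS
      rcases Finset.mem_insert.mp hS with rfl | hS
      · exact ⟨(hP C hC).1.mono Finset.subset_union_left,
          Finset.union_subset (hP C hC).2 (hP C' hC').2⟩
      · exact hP S (Finset.mem_of_mem_erase (Finset.mem_of_mem_erase hS))

lemma perc_singleton {V : Type*} [DecidableEq V] (E1 E2 : Finset (Finset V)) (J : Finset V) :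
    PercolatesOn {J} E1 E2 := by
  unfold PercolatesOn
  rw [Finset.image_singleton]

lemma perc_union {V : Type*} [DecidableEq V] (E1 E2 : Finset (Finset V))
    (C C' : Finset (Finset V)) (hCne : C.Nonempty) (hC'ne : C'.Nonempty)
    (hd : Disjoint C C') (hm : Mergeable E1 E2 C C')
    (h : PercolatesOn C E1 E2) (h' : PercolatesOn C' E1 E2) :
    PercolatesOn (C ∪ C') E1 E2 := by
  have hne : C ≠ C' := by
    rintro rfl
    exact hCne.ne_empty (by simpa using disjoint_self.mp hd)
  have h1 := mergeStep_lift E1 E2 C (C'.image fun J => ({J} : Finset (Finset V)))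
    (by
      intro D hD
      obtain ⟨J, hJ, rfl⟩ := Finset.mem_image.mp hD
      simp only [Finset.singleton_subset_iff]
      exact fun hJC => Finset.disjoint_left.mp hd hJC hJ)
    _ _ h
    (by
      intro S hS
      obtain ⟨J, hJ, rfl⟩ := Finset.mem_image.mp hS
      exact ⟨Finset.singleton_nonempty J, Finset.singleton_subset_iff.mpr hJ⟩)
  have h2 := mergeStep_lift E1 E2 C' ({C} : Finset (Finset (Finset V)))
    (by
      intro D hD
      rw [Finset.mem_singleton] at hD
      subst hD
      intro hsub
      exact hCne.ne_empty (by simpa using disjoint_self.mp (hd.mono_right hsub)))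
    _ _ h'
    (by
      intro S hS
      obtain ⟨J, hJ, rfl⟩ := Finset.mem_image.mp hS
      exact ⟨Finset.singleton_nonempty J, Finset.singleton_subset_iff.mpr hJ⟩)
  unfold PercolatesOn at *
  rw [Finset.image_union]
  refine h1.trans ?_
  rw [Finset.union_comm]
  refine h2.trans ?_
  refine Relation.ReflTransGen.single ?_
  refine ⟨C, by simp, C', by simp, hne, hm, ?_⟩
  have hE : ((({C'} ∪ {C} : Finset (Finset (Finset V))).erase C).erase C') = ∅ := by
    ext x
    simp only [Finset.mem_erase, Finset.mem_union, Finset.mem_singleton, Finset.notMem_empty,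
      iff_false]
    tauto
  rw [hE]
  simp

lemma key {V : Type*} [DecidableEq V] [Fintype V] (E1 E2 : Finset (Finset V)) (j N : ℕ)
    (hNcard : N ≤ ((Finset.univ : Finset V).powersetCard j).card) :
    ∀ P, Relation.ReflTransGen (MergeStep E1 E2) P {(Finset.univ : Finset V).powersetCard j} →
      (∀ C ∈ P, C.Nonempty ∧ C ⊆ (Finset.univ : Finset V).powersetCard j ∧
        PercolatesOn C E1 E2) →
      (∀ C ∈ P, ∀ C' ∈ P, C ≠ C' → Disjoint C C') →
      (∀ C ∈ P, C.card < N) →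
      ∃ J0, J0 ⊆ (Finset.univ : Finset V).powersetCard j ∧ N ≤ J0.card ∧ J0.card ≤ 2 * N ∧
        PercolatesOn J0 E1 E2 := by
  intro P h
  induction h using Relation.ReflTransGen.head_induction_on with
  | refl =>
    intro _ _ hsize
    exact absurd (hsize _ (Finset.mem_singleton_self _)) (by omega)
  | @head P _ hstep _ ih =>
    intro hgood hdisj hsize
    obtain ⟨C, hC, C', hC', hne, hm, rfl⟩ := hstep
    obtain ⟨hCne, hCsub, hCperc⟩ := hgood C hC
    obtain ⟨hC'ne, hC'sub, hC'perc⟩ := hgood C' hC'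
    have hdCC' := hdisj C hC C' hC' hne
    have hpercU := perc_union E1 E2 C C' hCne hC'ne hdCC' hm hCperc hC'perc
    by_cases hbig : N ≤ (C ∪ C').card
    · refine ⟨C ∪ C', Finset.union_subset hCsub hC'sub, hbig, ?_, hpercU⟩
      have h1 := Finset.card_union_le C C'
      have h2 := hsize C hC
      have h3 := hsize C' hC'
      omega
    · have hmem : ∀ D ∈ insert (C ∪ C') ((P.erase C).erase C'),
          D = C ∪ C' ∨ (D ∈ P ∧ D ≠ C ∧ D ≠ C') := by
        intro D hD
        rcases Finset.mem_insert.mp hD with hh | hh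
        · exact Or.inl hh
        · exact Or.inr ⟨Finset.mem_of_mem_erase (Finset.mem_of_mem_erase hh),
            Finset.ne_of_mem_erase (Finset.mem_of_mem_erase hh), Finset.ne_of_mem_erase hh⟩
      apply ih
      · intro D hD
        rcases hmem D hD with rfl | ⟨hDP, _, _⟩
        · exact ⟨hCne.mono Finset.subset_union_left,
            Finset.union_subset hCsub hC'sub, hpercU⟩
        · exact hgood D hDP
      · intro D hD D' hD' hDD'
        rcases hmem D hD with rfl | ⟨hDP, hDC, hDC'⟩
        · rcases hmem D' hD' with rfl | ⟨hD'P, hD'C, hD'C'⟩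
          · exact absurd rfl hDD'
          · exact Finset.disjoint_union_left.mpr
              ⟨hdisj C hC D' hD'P (Ne.symm hD'C), hdisj C' hC' D' hD'P (Ne.symm hD'C')⟩
        · rcases hmem D' hD' with rfl | ⟨hD'P, _, _⟩
          · exact (Finset.disjoint_union_left.mpr
              ⟨hdisj C hC D hDP (Ne.symm hDC), hdisj C' hC' D hDP (Ne.symm hDC')⟩).symm
          · exact hdisj D hDP D' hD'P hDD'
      · intro D hD
        rcases hmem D hD with rfl | ⟨hDP, _, _⟩
        · omega
        · exact hsize D hDP

/-- **Claim (bottleneck).** Let `H = (V, E1, E2)` be a finite double `k`-graph.  For every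
positive integer `N ≤ binom(|V|,j)/binom(k,j)`, if `H` `j`-percolates then `H` contains an
internally spanned triple of size `ℓ` for some `N ≤ ℓ ≤ binom(k,j)·N`: there are
`J0 ⊆ V^{(j)}`, `F1 ⊆ E1`, `F2 ⊆ E2` with `N ≤ |J0| ≤ binom(k,j)·N` such that `J0`
percolates on `(V, F1, F2)`. -/
theorem exists_internally_spanned_triple (k j : ℕ) (hj : 1 ≤ j) (hjk : j ≤ k - 1)
    (V : Type*) [DecidableEq V] [Fintype V]
    (E1 E2 : Finset (Finset V))
    (hE1 : E1 ⊆ (Finset.univ : Finset V).powersetCard k)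
    (hE2 : E2 ⊆ (Finset.univ : Finset V).powersetCard k)
    (N : ℕ) (hN : 0 < N)
    (hNle : (N : ℝ) ≤ ((Fintype.card V).choose j : ℝ) / (k.choose j : ℝ))
    (hperc : JPercolates j E1 E2) :
    ∃ J0 F1 F2 : Finset (Finset V),
      J0 ⊆ (Finset.univ : Finset V).powersetCard j ∧
      F1 ⊆ E1 ∧ F2 ⊆ E2 ∧
      N ≤ J0.card ∧ J0.card ≤ k.choose j * N ∧
      PercolatesOn J0 F1 F2 := by
  have hchoose2 : 2 ≤ k.choose j := by
    rcases k with _ | k'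
    · omega
    rcases j with _ | j'
    · omega
    rw [Nat.choose_succ_succ]
    have h1 := Nat.choose_pos (show j' ≤ k' by omega)
    have h2 := Nat.choose_pos (show j' + 1 ≤ k' by omega)
    simp only [Nat.succ_eq_add_one] at *
    omega
  have hNn : N ≤ (Fintype.card V).choose j := by
    have hr : (N : ℝ) ≤ ((Fintype.card V).choose j : ℝ) := by
      refine le_trans hNle (div_le_self (by positivity) ?_)
      exact_mod_cast (by omega : 1 ≤ k.choose j)
    exact_mod_cast hr
  have hNcard : N ≤ ((Finset.univ : Finset V).powersetCard j).card := by
    rw [Finset.card_powersetCard, Finset.card_univ]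
    exact hNn
  by_cases hN1 : N = 1
  · have hnon : ((Finset.univ : Finset V).powersetCard j).Nonempty :=
      Finset.card_pos.mp (by omega)
    obtain ⟨J, hJ⟩ := hnon
    refine ⟨{J}, ∅, ∅, Finset.singleton_subset_iff.mpr hJ, Finset.empty_subset _,
      Finset.empty_subset _, ?_, ?_, perc_singleton ∅ ∅ J⟩
    · rw [hN1, Finset.card_singleton]
    · rw [hN1, Nat.mul_one, Finset.card_singleton]
      omega
  · obtain ⟨J0, hsub, hlow, hhigh, hperc'⟩ := key E1 E2 j N hNcard _ hperc
      (by
        intro C hC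
        obtain ⟨J, hJ, rfl⟩ := Finset.mem_image.mp hC
        exact ⟨Finset.singleton_nonempty J, Finset.singleton_subset_iff.mpr hJ,
          perc_singleton E1 E2 J⟩)
      (by
        intro C hC C' hC' hne
        obtain ⟨J, hJ, rfl⟩ := Finset.mem_image.mp hC
        obtain ⟨J', hJ', rfl⟩ := Finset.mem_image.mp hC'
        rw [Finset.disjoint_singleton]
        exact fun h => hne (by rw [h])
      )
      (by
        intro C hC
        obtain ⟨J, hJ, rfl⟩ := Finset.mem_image.mp hC
        rw [Finset.card_singleton]
        omega)
    refine ⟨J0, E1, E2, hsub, le_refl _, le_refl _, hlow, ?_, hperc'⟩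
    calc J0.card ≤ 2 * N := hhigh
      _ ≤ k.choose j * N := Nat.mul_le_mul_right _ hchoose2
end

section
/- Let 1 ≤ j ≤ k−1 be integers and let V be a finite set. Every internally spanned triple (J0,E1,E2) on V is traversable, and consequently contains an edge-minimal traversable triple: there exist F1 ⊆ E1 and F2 ⊆ E2 such that (J0,F1,F2) is an edge-minimal traversable triple. -/
open Finset Filter

/-- A subfamily `Jstar ⊆ Jfam` of `j`-sets is `Jfam`-traversable in the `k`-graph `(V, E)`:
for any two distinct `A, B ∈ Jstar` there is a sequence of edges `e_0, …, e_m ∈ E` with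
`A ⊆ e_0`, `B ⊆ e_m`, such that the intersection of any two consecutive edges contains some
`j`-set belonging to `Jfam`.  (Singletons are trivially traversable.) -/
def TravIn {V : Type*} [DecidableEq V] (Jfam E Jstar : Finset (Finset V)) : Prop :=
  ∀ A ∈ Jstar, ∀ B ∈ Jstar, A ≠ B →
    ∃ (m : ℕ) (es : Fin (m + 1) → Finset V),
      (∀ i, es i ∈ E) ∧ A ⊆ es 0 ∧ B ⊆ es (Fin.last m) ∧
      ∀ i : Fin m, ∃ I ∈ Jfam, I ⊆ es i.castSucc ∧ I ⊆ es i.succ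

/-- The family `Jfam` is traversable in `(V, E)` if it is `Jfam`-traversable. -/
def Trav {V : Type*} [DecidableEq V] (Jfam E : Finset (Finset V)) : Prop :=
  TravIn Jfam E Jfam

/-- A triple `(J0, E1, E2)` is traversable if `J0` is traversable in both the red `k`-graph
`(V, E1)` and the blue `k`-graph `(V, E2)`. -/
def TravTriple {V : Type*} [DecidableEq V] (J0 E1 E2 : Finset (Finset V)) : Prop :=
  Trav J0 E1 ∧ Trav J0 E2

/-- A triple `(J0, E1, E2)` is an edge-minimal traversable triple if it is traversable and
removing any edge from `E1` or from `E2` destroys traversability. -/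
def EdgeMinTravTriple {V : Type*} [DecidableEq V] (J0 E1 E2 : Finset (Finset V)) : Prop :=
  TravTriple J0 E1 E2 ∧
  (∀ e ∈ E1, ¬ Trav J0 (E1.erase e)) ∧
  (∀ e ∈ E2, ¬ Trav J0 (E2.erase e))

/-! Join two `j`-sets of `J0` when some edge of `E` covers both. Along the percolation process
every cluster stays inside one component of this graph, for `E = E1` and for `E = E2`, because a
merge is witnessed by exactly one such adjacency of each colour. A walk `I₀, …, I_m` in the graph,
together with edges `eᵢ ⊇ Iᵢ ∪ Iᵢ₊₁`, is a traversal whose consecutive edges share `Iᵢ₊₁`.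
Edge-minimal subfamilies exist because inclusion of finite sets is well founded. -/

theorem SimpleGraph.reachable_of_mem_union {α : Type*} {G : SimpleGraph α} {s t : Set α}
    (hs : ∀ a ∈ s, ∀ b ∈ s, G.Reachable a b) (ht : ∀ a ∈ t, ∀ b ∈ t, G.Reachable a b)
    (hst : ∃ a ∈ s, ∃ b ∈ t, G.Reachable a b) :
    ∀ a ∈ s ∪ t, ∀ b ∈ s ∪ t, G.Reachable a b := by
  obtain ⟨x, hx, y, hy, hxy⟩ := hst
  have cross : ∀ a ∈ s, ∀ b ∈ t, G.Reachable a b := fun a ha b hb =>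
    ((hs a ha x hx).trans hxy).trans (ht y hy b hb)
  rintro a (ha | ha) b (hb | hb)
  · exact hs a ha b hb
  · exact cross a ha b hb
  · exact (cross b hb a ha).symm
  · exact ht a ha b hb

theorem Finset.exists_subset_forall_not_erase {α : Type*} [DecidableEq α] {P : Finset α → Prop}
    {s : Finset α} (hs : P s) : ∃ t ⊆ s, P t ∧ ∀ a ∈ t, ¬ P (t.erase a) := by
  obtain ⟨t, hts, ht⟩ := exists_minimal_le_of_wellFoundedLT P s hs
  exact ⟨t, hts, ht.prop, fun a ha => ht.not_prop_of_lt (erase_ssubset ha)⟩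

namespace JigsawPercolation

variable {V : Type*} [DecidableEq V]

def coverGraph (J0 E : Finset (Finset V)) : SimpleGraph (Finset V) where
  Adj A B := A ≠ B ∧ A ∈ J0 ∧ B ∈ J0 ∧ ∃ e ∈ E, A ∪ B ⊆ e
  symm := ⟨fun A B ⟨hAB, hA, hB, e, he, hABe⟩ =>
    ⟨hAB.symm, hB, hA, e, he, union_comm A B ▸ hABe⟩⟩
  loopless := ⟨fun _ h => h.1 rfl⟩

variable {J0 E : Finset (Finset V)}

@[simp]
theorem coverGraph_adj {A B : Finset V} :
    (coverGraph J0 E).Adj A B ↔ A ≠ B ∧ A ∈ J0 ∧ B ∈ J0 ∧ ∃ e ∈ E, A ∪ B ⊆ e :=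
  Iff.rfl

theorem coverGraph_reachable {A B e : Finset V} (hA : A ∈ J0) (hB : B ∈ J0) (he : e ∈ E)
    (hABe : A ∪ B ⊆ e) : (coverGraph J0 E).Reachable A B := by
  obtain rfl | hAB := eq_or_ne A B
  · rfl
  · exact SimpleGraph.Adj.reachable (coverGraph_adj.2 ⟨hAB, hA, hB, e, he, hABe⟩)

theorem travIn_of_reachable {Jstar : Finset (Finset V)}
    (h : ∀ A ∈ Jstar, ∀ B ∈ Jstar, (coverGraph J0 E).Reachable A B) : TravIn J0 E Jstar := by
  intro A hA B hB hAB
  obtain ⟨p⟩ := h A hA B hB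
  have hlen : p.length ≠ 0 := fun h0 => hAB (p.eq_of_length_eq_zero h0)
  set m := p.length - 1
  have hstep (i : Fin (m + 1)) : (coverGraph J0 E).Adj (p.getVert i) (p.getVert (i + 1)) :=
    p.adj_getVert_succ (by omega)
  choose es hesE hes using fun i => (hstep i).2.2.2
  refine ⟨m, es, hesE, ?_, ?_, fun i => ⟨p.getVert (i + 1), (hstep i.succ).2.1, ?_, ?_⟩⟩
  · simpa only [Fin.coe_ofNat_eq_mod, Nat.zero_mod, p.getVert_zero] using
      subset_union_left.trans (hes 0)
  · have hB : p.getVert (m + 1) = B := p.getVert_of_length_le (by omega)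
    simpa only [Fin.val_last, hB] using subset_union_right.trans (hes (Fin.last m))
  · simpa only [Fin.val_castSucc] using subset_union_right.trans (hes i.castSucc)
  · simpa only [Fin.val_succ] using subset_union_left.trans (hes i.succ)

def IsConnectedCluster (J0 E C : Finset (Finset V)) : Prop :=
  C ⊆ J0 ∧ ∀ A ∈ C, ∀ B ∈ C, (coverGraph J0 E).Reachable A B

theorem isConnectedCluster_singleton {A : Finset V} (hA : A ∈ J0) :
    IsConnectedCluster J0 E {A} := by
  refine ⟨singleton_subset_iff.2 hA, ?_⟩
  simp only [mem_singleton]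
  rintro _ rfl _ rfl
  rfl

theorem IsConnectedCluster.union {C C' : Finset (Finset V)} (hC : IsConnectedCluster J0 E C)
    (hC' : IsConnectedCluster J0 E C') (hlink : ∃ J ∈ C, ∃ J' ∈ C', ∃ e ∈ E, J ∪ J' ⊆ e) :
    IsConnectedCluster J0 E (C ∪ C') := by
  obtain ⟨J, hJ, J', hJ', e, he, hJJ'⟩ := hlink
  refine ⟨union_subset hC.1 hC'.1, ?_⟩
  simpa only [← mem_coe, coe_union] using
    SimpleGraph.reachable_of_mem_union hC.2 hC'.2
      ⟨J, hJ, J', hJ', coverGraph_reachable (hC.1 hJ) (hC'.1 hJ') he hJJ'⟩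

def AllClustersConnected (J0 E1 E2 : Finset (Finset V)) (P : Finset (Finset (Finset V))) :
    Prop :=
  ∀ C ∈ P, IsConnectedCluster J0 E1 C ∧ IsConnectedCluster J0 E2 C

variable {E1 E2 : Finset (Finset V)}

theorem AllClustersConnected.mergeStep {P P' : Finset (Finset (Finset V))}
    (hP : AllClustersConnected J0 E1 E2 P) (hstep : MergeStep E1 E2 P P') :
    AllClustersConnected J0 E1 E2 P' := by
  obtain ⟨C, hC, C', hC', -, ⟨hlink1, hlink2⟩, rfl⟩ := hstep
  intro D hD
  obtain rfl | hD := mem_insert.1 hD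
  · exact ⟨(hP C hC).1.union (hP C' hC').1 hlink1, (hP C hC).2.union (hP C' hC').2 hlink2⟩
  · exact hP D (mem_of_mem_erase (mem_of_mem_erase hD))

theorem AllClustersConnected.reflTransGen {P P' : Finset (Finset (Finset V))}
    (hP : AllClustersConnected J0 E1 E2 P) (h : Relation.ReflTransGen (MergeStep E1 E2) P P') :
    AllClustersConnected J0 E1 E2 P' := by
  induction h with
  | refl => exact hP
  | tail _ hstep ih => exact ih.mergeStep hstep

theorem isConnectedCluster_of_percolatesOn (hspan : PercolatesOn J0 E1 E2) :
    IsConnectedCluster J0 E1 J0 ∧ IsConnectedCluster J0 E2 J0 := by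
  have hinit : AllClustersConnected J0 E1 E2 (J0.image fun J => ({J} : Finset (Finset V))) := by
    simp only [AllClustersConnected, forall_mem_image]
    exact fun J hJ => ⟨isConnectedCluster_singleton hJ, isConnectedCluster_singleton hJ⟩
  exact hinit.reflTransGen hspan J0 (mem_singleton_self J0)

end JigsawPercolation

theorem internally_spanned_traversable_general
    (V : Type*) [DecidableEq V]
    (J0 E1 E2 : Finset (Finset V))
    (hspan : PercolatesOn J0 E1 E2) :
    TravTriple J0 E1 E2 ∧
      ∃ F1 ⊆ E1, ∃ F2 ⊆ E2, EdgeMinTravTriple J0 F1 F2 := by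
  obtain ⟨hconn1, hconn2⟩ := JigsawPercolation.isConnectedCluster_of_percolatesOn hspan
  have htrav1 : Trav J0 E1 := JigsawPercolation.travIn_of_reachable hconn1.2
  have htrav2 : Trav J0 E2 := JigsawPercolation.travIn_of_reachable hconn2.2
  obtain ⟨F1, hF1, hTF1, hmin1⟩ := exists_subset_forall_not_erase htrav1
  obtain ⟨F2, hF2, hTF2, hmin2⟩ := exists_subset_forall_not_erase htrav2
  exact ⟨⟨htrav1, htrav2⟩, F1, hF1, F2, hF2, ⟨hTF1, hTF2⟩, hmin1, hmin2⟩

/-- **Fact.** Every internally spanned triple `(J0, E1, E2)` (i.e. one where `J0` percolates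
on `(V, E1, E2)`) is traversable, and consequently contains an edge-minimal traversable
triple: there are `F1 ⊆ E1` and `F2 ⊆ E2` such that `(J0, F1, F2)` is an edge-minimal
traversable triple. -/
theorem internally_spanned_traversable (k j : ℕ) (hj : 1 ≤ j) (hjk : j ≤ k - 1)
    (V : Type*) [DecidableEq V] [Fintype V]
    (J0 E1 E2 : Finset (Finset V))
    (hJ0 : J0 ⊆ (Finset.univ : Finset V).powersetCard j)
    (hE1 : E1 ⊆ (Finset.univ : Finset V).powersetCard k)
    (hE2 : E2 ⊆ (Finset.univ : Finset V).powersetCard k)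
    (hspan : PercolatesOn J0 E1 E2) :
    TravTriple J0 E1 E2 ∧
      ∃ F1 ⊆ E1, ∃ F2 ⊆ E2, EdgeMinTravTriple J0 F1 F2 :=
  internally_spanned_traversable_general V J0 E1 E2 hspan
end

section
/- Let 1 ≤ j ≤ k−1 be integers, V a finite set, E ⊆ V^{(k)}, and J ⊆ V^{(j)} nonempty. If (J,E) is an edge-minimal traversable pair (i.e. J is traversable in (V,E) but not in (V,E∖{e}) for any e ∈ E), then |E| ≤ |J| − 1. -/
open Finset Filter

/-!
Link two members of `J` when some edge of `E` contains both; `J` is traversable exactly when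
this graph on `J` is connected. By minimality each edge `e` contains two members `A e`, `B e`
of `J` that are no longer linked once `e` is removed. The pairs `{A e, B e}` are distinct, and
each is a bridge of the graph they span, since a detour would only use other edges. So they
form a forest on `J`, which has at most `|J| - 1` edges.
-/

lemma SimpleGraph.IsAcyclic.card_edgeSet_add_one_le {W : Type*} [Finite W] [Nonempty W]
    {G : SimpleGraph W} (hG : G.IsAcyclic) : Nat.card G.edgeSet + 1 ≤ Nat.card W := by
  obtain ⟨T, hGT, -, hT⟩ :=
    SimpleGraph.connected_top.exists_isTree_le_of_le_of_isAcyclic le_top hG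
  rw [← (SimpleGraph.isTree_iff_connected_and_card.1 hT).2]
  gcongr
  exact Nat.card_mono (Set.toFinite _) (SimpleGraph.edgeSet_mono hGT)

section Traversal

variable {V : Type*}

-- `TravIn Jfam E Jstar` unfolds to `∀ A ∈ Jstar, ∀ B ∈ Jstar, A ≠ B → Traverses Jfam E A B`.

def Traverses (J E : Finset (Finset V)) (A B : Finset V) : Prop :=
  ∃ (m : ℕ) (es : Fin (m + 1) → Finset V),
    (∀ i, es i ∈ E) ∧ A ⊆ es 0 ∧ B ⊆ es (Fin.last m) ∧
    ∀ i : Fin m, ∃ I ∈ J, I ⊆ es i.castSucc ∧ I ⊆ es i.succ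

lemma traverses_of_subset {J E : Finset (Finset V)} {e A B : Finset V} (he : e ∈ E)
    (hA : A ⊆ e) (hB : B ⊆ e) : Traverses J E A B :=
  ⟨0, fun _ => e, fun _ => he, hA, hB, fun i => i.elim0⟩

lemma Traverses.cons {J E : Finset (Finset V)} {e A B C : Finset V} (he : e ∈ E)
    (hA : A ⊆ e) (hC : C ⊆ e) (hCJ : C ∈ J) (h : Traverses J E C B) : Traverses J E A B := by
  obtain ⟨m, es, hes, hC0, hBl, hchain⟩ := h
  refine ⟨m + 1, Fin.cons e es, Fin.cases he hes, hA, by simpa [← Fin.succ_last], ?_⟩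
  refine Fin.cases ⟨C, hCJ, hC, hC0⟩ fun i => ?_
  simpa [← Fin.succ_castSucc] using hchain i

def linkGraph (J E : Finset (Finset V)) : SimpleGraph J :=
  SimpleGraph.fromRel fun A B => ∃ e ∈ E, (A : Finset V) ⊆ e ∧ (B : Finset V) ⊆ e

lemma linkGraph_reachable_of_subset {J E : Finset (Finset V)} {e : Finset V} (he : e ∈ E)
    {A B : J} (hA : (A : Finset V) ⊆ e) (hB : (B : Finset V) ⊆ e) :
    (linkGraph J E).Reachable A B := by
  by_cases hAB : A = B
  · exact hAB ▸ .refl A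
  · exact SimpleGraph.Adj.reachable ⟨hAB, .inl ⟨e, he, hA, hB⟩⟩

lemma Traverses.reachable {J E : Finset (Finset V)} {A B : J}
    (h : Traverses J E A B) : (linkGraph J E).Reachable A B := by
  obtain ⟨m, es, hes, hA, hB, hchain⟩ := h
  suffices ∀ i, ∀ X : J, (X : Finset V) ⊆ es i → (linkGraph J E).Reachable A X from
    this _ B hB
  intro i
  induction i using Fin.induction with
  | zero => exact fun X hX => linkGraph_reachable_of_subset (hes 0) hA hX
  | succ i ih =>
    intro X hX
    obtain ⟨I, hIJ, hI, hI'⟩ := hchain i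
    exact (ih ⟨I, hIJ⟩ hI).trans (linkGraph_reachable_of_subset (hes _) hI' hX)

lemma traverses_of_transGen {J E : Finset (Finset V)} {A B : J}
    (h : Relation.TransGen (linkGraph J E).Adj A B) : Traverses J E A B := by
  induction h using Relation.TransGen.head_induction_on with
  | single hAB =>
    obtain ⟨-, ⟨e, he, hA, hB⟩ | ⟨e, he, hB, hA⟩⟩ := hAB <;>
      exact traverses_of_subset he hA hB
  | @head A C hAC _ ih =>
    obtain ⟨-, ⟨e, he, hA, hC⟩ | ⟨e, he, hC, hA⟩⟩ := hAC <;>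
      exact ih.cons he hA hC C.2

def pairGraph {J E : Finset (Finset V)} (A B : E → J) : SimpleGraph J :=
  SimpleGraph.fromEdgeSet (Set.range fun e => s(A e, B e))

lemma subset_of_mem_pair {J E : Finset (Finset V)} {A B : E → J}
    (hA : ∀ e, (A e : Finset V) ⊆ e) (hB : ∀ e, (B e : Finset V) ⊆ e) {e : E} {X : J}
    (hX : X ∈ s(A e, B e)) : (X : Finset V) ⊆ e := by
  rcases Sym2.mem_iff.1 hX with rfl | rfl
  exacts [hA e, hB e]

variable [DecidableEq V]

theorem trav_iff_preconnected {J E : Finset (Finset V)} :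
    Trav J E ↔ (linkGraph J E).Preconnected := by
  refine ⟨fun h A B => ?_, fun h A hA B hB hAB => ?_⟩
  · by_cases hAB : A = B
    · exact hAB ▸ .refl A
    · exact Traverses.reachable (h A A.2 B B.2 (Subtype.coe_ne_coe.2 hAB))
  · have hreach := (SimpleGraph.reachable_iff_reflTransGen _ _).1 (h ⟨A, hA⟩ ⟨B, hB⟩)
    rcases Relation.reflTransGen_iff_eq_or_transGen.1 hreach with hBA | hgen
    · exact absurd (congrArg Subtype.val hBA).symm hAB
    · exact traverses_of_transGen hgen

lemma exists_not_reachable_of_not_trav_erase {J E : Finset (Finset V)} {e : Finset V}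
    (htrav : Trav J E) (hmin : ¬ Trav J (E.erase e)) :
    ∃ A B : J, (A : Finset V) ⊆ e ∧ (B : Finset V) ⊆ e ∧
      ¬ (linkGraph J (E.erase e)).Reachable A B := by
  by_contra! hall
  have hstep : ∀ f ∈ E, ∀ X Y : J, (X : Finset V) ⊆ f → (Y : Finset V) ⊆ f →
      (linkGraph J (E.erase e)).Reachable X Y := by
    intro f hf X Y hX hY
    by_cases hfe : f = e
    · exact hall X Y (hfe ▸ hX) (hfe ▸ hY)
    · exact linkGraph_reachable_of_subset (Finset.mem_erase.2 ⟨hfe, hf⟩) hX hY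
  have hle : (linkGraph J E).Reachable ≤ (linkGraph J (E.erase e)).Reachable := by
    simp only [SimpleGraph.reachable_eq_reflTransGen]
    refine Relation.reflTransGen_closed fun X Y hXY => ?_
    rw [← SimpleGraph.reachable_eq_reflTransGen]
    obtain ⟨-, ⟨f, hf, hX, hY⟩ | ⟨f, hf, hY, hX⟩⟩ := hXY <;>
      exact hstep f hf X Y hX hY
  exact hmin (trav_iff_preconnected.2 fun A B => hle _ _ (trav_iff_preconnected.1 htrav A B))

lemma pairGraph_isAcyclic {J E : Finset (Finset V)} {A B : E → J}
    (hA : ∀ e, (A e : Finset V) ⊆ e) (hB : ∀ e, (B e : Finset V) ⊆ e)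
    (hAB : ∀ e : E, ¬ (linkGraph J (E.erase e)).Reachable (A e) (B e)) :
    (pairGraph A B).IsAcyclic := by
  refine SimpleGraph.isAcyclic_iff_forall_adj_isBridge.2 fun X Y hXY => ?_
  obtain ⟨⟨e, he : s(A e, B e) = s(X, Y)⟩, -⟩ := hXY
  rw [← he, SimpleGraph.isBridge_iff]
  refine fun hreach => hAB e (hreach.mono fun X Y hXY => ?_)
  rw [SimpleGraph.deleteEdges_adj, Set.mem_singleton_iff] at hXY
  obtain ⟨⟨⟨f, hf : s(A f, B f) = s(X, Y)⟩, hXY⟩, hfe⟩ := hXY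
  have hX : X ∈ s(A f, B f) := hf ▸ Sym2.mem_mk_left X Y
  have hY : Y ∈ s(A f, B f) := hf ▸ Sym2.mem_mk_right X Y
  refine ⟨hXY, .inl ⟨f, Finset.mem_erase.2 ⟨?_, f.2⟩, subset_of_mem_pair hA hB hX,
    subset_of_mem_pair hA hB hY⟩⟩
  rintro hfe'
  exact hfe (by rw [← hf, Subtype.ext hfe'])

lemma card_le_card_edgeSet_pairGraph {J E : Finset (Finset V)} {A B : E → J}
    (hA : ∀ e, (A e : Finset V) ⊆ e) (hB : ∀ e, (B e : Finset V) ⊆ e)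
    (hAB : ∀ e : E, ¬ (linkGraph J (E.erase e)).Reachable (A e) (B e)) :
    E.card ≤ Nat.card (pairGraph A B).edgeSet := by
  have hinj : Function.Injective fun e => s(A e, B e) := by
    intro e f (hef : s(A e, B e) = s(A f, B f))
    by_contra hne
    refine hAB e (linkGraph_reachable_of_subset (e := f)
      (Finset.mem_erase.2 ⟨Subtype.coe_ne_coe.2 (Ne.symm hne), f.2⟩) ?_ ?_)
    exacts [subset_of_mem_pair hA hB (hef ▸ Sym2.mem_mk_left _ _),
      subset_of_mem_pair hA hB (hef ▸ Sym2.mem_mk_right _ _)]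
  have hsub : (Set.range fun e => s(A e, B e)) ⊆ (pairGraph A B).edgeSet := by
    rintro _ ⟨e, rfl⟩
    exact ⟨⟨e, rfl⟩, fun h : A e = B e => hAB e (h ▸ .refl _)⟩
  calc E.card = Nat.card (Set.range fun e => s(A e, B e)) := by
        rw [Nat.card_range_of_injective hinj]; simp
    _ ≤ Nat.card (pairGraph A B).edgeSet := Nat.card_mono (Set.toFinite _) hsub

theorem card_add_one_le_of_forall_not_trav_erase {J E : Finset (Finset V)} (hJ : J.Nonempty)
    (htrav : Trav J E) (hmin : ∀ e ∈ E, ¬ Trav J (E.erase e)) : E.card + 1 ≤ J.card := by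
  choose A B hA hB hAB using
    fun e : E => exists_not_reachable_of_not_trav_erase htrav (hmin e e.2)
  have : Nonempty J := hJ.to_subtype
  calc E.card + 1 ≤ Nat.card (pairGraph A B).edgeSet + 1 := by
        gcongr; exact card_le_card_edgeSet_pairGraph hA hB hAB
    _ ≤ Nat.card J := (pairGraph_isAcyclic hA hB hAB).card_edgeSet_add_one_le
    _ = J.card := by simp

end Traversal

theorem edgeMin_pair_card_le_general
    (V : Type*) [DecidableEq V]
    (J E : Finset (Finset V))
    (hne : J.Nonempty)
    (htrav : Trav J E)
    (hmin : ∀ e ∈ E, ¬ Trav J (E.erase e)) :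
    E.card ≤ J.card - 1 := by
  have := card_add_one_le_of_forall_not_trav_erase hne htrav hmin
  omega

/-- **Claim (number of edges of an edge-minimal traversable pair).** If `J ⊆ V^{(j)}` is
nonempty, `E ⊆ V^{(k)}`, and `(J, E)` is an edge-minimal traversable pair (i.e. `J` is
traversable in `(V, E)` but not in `(V, E \ {e})` for any `e ∈ E`), then `|E| ≤ |J| − 1`. -/
theorem edgeMin_pair_card_le (k j : ℕ) (hj : 1 ≤ j) (hjk : j ≤ k - 1)
    (V : Type*) [DecidableEq V] [Fintype V]
    (J E : Finset (Finset V))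
    (hJ : J ⊆ (Finset.univ : Finset V).powersetCard j)
    (hE : E ⊆ (Finset.univ : Finset V).powersetCard k)
    (hne : J.Nonempty)
    (htrav : Trav J E)
    (hmin : ∀ e ∈ E, ¬ Trav J (E.erase e)) :
    E.card ≤ J.card - 1 :=
  edgeMin_pair_card_le_general V J E hne htrav hmin
end

section
/- Let 1 ≤ j ≤ k−1 be integers. There is a constant C' = C'(k,j) > 0, independent of a and m (one may take C' = 9·binom(k,j)²), such that for all integers a > m ≥ 0 we have |M_{a,m}| ≤ (C')^{a−1}. -/
open Finset Filter

/-- For an `a × (binom(k,j)+1)` matrix `M` of nonnegative integers (rows indexed by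
`i ∈ {1,…,a}`, columns indexed by `z ∈ {0,…,binom(k,j)}`),
`fMat M = Σ_i Σ_z z·M i z`. -/
def fMat {a b : ℕ} (M : Fin a → Fin b → ℕ) : ℕ :=
  ∑ i : Fin a, ∑ z : Fin b, (z : ℕ) * M i z

/-- `gMat M = Σ_i Σ_z M i z`, the sum of all entries of `M`. -/
def gMat {a b : ℕ} (M : Fin a → Fin b → ℕ) : ℕ :=
  ∑ i : Fin a, ∑ z : Fin b, M i z

/-- `matSet k j a m` is the set `M_{a,m}` of all `a × (binom(k,j)+1)` matrices `M` with
nonnegative integer entries satisfying `f(M) = a − 1` and `g(M) = m`. -/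
def matSet (k j a m : ℕ) : Set (Fin a → Fin (k.choose j + 1) → ℕ) :=
  {M | fMat M = a - 1 ∧ gMat M = m}

/-! The condition `g(M) = m` alone leaves at most `multichoose (a * b) m` matrices (stars and
bars: such a matrix is a multiset of `m` cells), and for `m < a` this is at most
`2 ^ (a * b + m - 1) ≤ (4 ^ (b + 1)) ^ (a - 1)` as soon as `a ≥ 2`. -/

def gMatLevelEquiv (a b m : ℕ) :
    {M : Fin a → Fin b → ℕ // gMat M = m} ≃ {P : Fin a × Fin b → ℕ // ∑ p, P p = m} :=
  (Equiv.curry _ _ _).symm.subtypeEquiv fun M => by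
    simp [gMat, Fintype.sum_prod_type]

theorem finite_gMat_level (a b m : ℕ) : {M : Fin a → Fin b → ℕ | gMat M = m}.Finite :=
  Set.finite_coe_iff.mp <|
    Finite.of_equiv _ ((gMatLevelEquiv a b m).trans (Sym.equivNatSumOfFintype _ m).symm).symm

theorem ncard_gMat_level (a b m : ℕ) :
    {M : Fin a → Fin b → ℕ | gMat M = m}.ncard = (a * b).multichoose m := by
  rw [← Nat.card_coe_set_eq, Set.coe_ofPred,
    Nat.card_congr ((gMatLevelEquiv a b m).trans (Sym.equivNatSumOfFintype _ m).symm),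
    Sym.natCard_sym_eq_multichoose, Nat.card_prod, Nat.card_fin, Nat.card_fin]

theorem multichoose_mul_succ_le (b r m : ℕ) (hm : m ≤ r) :
    (b * (r + 1)).multichoose m ≤ (4 ^ (b + 1)) ^ r := by
  rcases Nat.eq_zero_or_pos r with rfl | hr
  · simp [Nat.le_zero.mp hm, Nat.multichoose_zero_right]
  calc (b * (r + 1)).multichoose m
      ≤ 2 ^ (b * (r + 1) + m - 1) := by
        rw [Nat.multichoose_eq]; exact Nat.choose_le_two_pow _ _
    _ ≤ 2 ^ (2 * (b + 1) * r) :=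
        Nat.pow_le_pow_right two_pos (Nat.sub_le_iff_le_add.mpr (by nlinarith))
    _ = (4 ^ (b + 1)) ^ r := by rw [pow_mul, pow_mul]; norm_num

theorem matSet_card_upper_bound_general (k j : ℕ) :
    ∃ C' : ℝ, 0 < C' ∧
      ∀ a m : ℕ, m < a →
        ((matSet k j a m).ncard : ℝ) ≤ C' ^ (a - 1) := by
  set b := k.choose j + 1
  refine ⟨4 ^ (b + 1), by positivity, fun a m hma => ?_⟩
  obtain ⟨r, rfl⟩ : ∃ r, a = r + 1 := ⟨a - 1, by omega⟩
  have hsub : matSet k j (r + 1) m ⊆ {M | gMat M = m} := fun _ hM => hM.2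
  have hcard : (matSet k j (r + 1) m).ncard ≤ (4 ^ (b + 1)) ^ r :=
    calc (matSet k j (r + 1) m).ncard
        ≤ {M : Fin (r + 1) → Fin b → ℕ | gMat M = m}.ncard :=
          Set.ncard_le_ncard hsub (finite_gMat_level _ _ _)
      _ = ((r + 1) * b).multichoose m := ncard_gMat_level _ _ _
      _ ≤ (4 ^ (b + 1)) ^ r := by
          rw [mul_comm]; exact multichoose_mul_succ_le b r m (by omega)
  simpa using (show ((matSet k j (r + 1) m).ncard : ℝ) ≤ ((4 ^ (b + 1)) ^ r : ℕ) by
    exact_mod_cast hcard)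

/-- **Claim.** Let `1 ≤ j ≤ k−1`.  There is a constant `C' = C'(k,j) > 0`, independent of
`a` and `m` (one may take `C' = 9·binom(k,j)²`), such that for all integers `a > m ≥ 0` we
have `|M_{a,m}| ≤ (C')^{a−1}`. -/
theorem matSet_card_upper_bound (k j : ℕ) (hj : 1 ≤ j) (hjk : j ≤ k - 1) :
    ∃ C' : ℝ, 0 < C' ∧
      ∀ a m : ℕ, m < a →
        ((matSet k j a m).ncard : ℝ) ≤ C' ^ (a - 1) :=
  matSet_card_upper_bound_general k j
end

section
/- Let 1 ≤ j ≤ k−1 be integers. There exists a constant C = C(k,j) > 0 such that for every finite set V and all integers ℓ, r, b with ℓ > r ≥ 0 and ℓ > b ≥ 0, exchanging the roles of the two colours, the number of edge-minimal traversable triples on V of size ℓ with r red edges and b blue edges also satisfies |T_{ℓ,r,b}| ≤ |V|^j · C^{ℓ−1} · (|V|^{k−j})^b · (ℓ·|V|^{k−j−1})^r. -/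
open Finset Filter

/-- `T_{ℓ,r,b}`: the set of all edge-minimal traversable triples `(J0, E1, E2)` on the
finite vertex set `V` (with `J0 ⊆ V^{(j)}` and `E1, E2 ⊆ V^{(k)}`) of size `|J0| = ℓ` with
`|E1| = r` red edges and `|E2| = b` blue edges. -/
def minTravTriples (k j : ℕ) (V : Type*) [DecidableEq V] [Fintype V] (ℓ r b : ℕ) :
    Set (Finset (Finset V) × Finset (Finset V) × Finset (Finset V)) :=
  {T | T.1 ⊆ (Finset.univ : Finset V).powersetCard j ∧
       T.2.1 ⊆ (Finset.univ : Finset V).powersetCard k ∧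
       T.2.2 ⊆ (Finset.univ : Finset V).powersetCard k ∧
       EdgeMinTravTriple T.1 T.2.1 T.2.2 ∧
       T.1.card = ℓ ∧ T.2.1.card = r ∧ T.2.2.card = b}

/-! The blue edges of an edge-minimal traversable triple are connected for the adjacency
"sharing at least `j` points": each blue edge contains a member of `J0` (otherwise it could be
removed), and a traversal between two members of `J0` passes through blue edges consecutively
sharing members of `J0`. This adjacency has maximum degree `Δ = C(k,j) |V|^(k-j)`, and a rooted
connected family of `b` edges is recorded by a depth-first exploration, a word of `2(b-1)` moves
of which `b-1` choose a neighbour; so there are at most `|V|^k 4^(b-1) Δ^(b-1)` blue families.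
Next, `J0` consists of `j`-subsets of blue edges (at most `2^(b C(k,j))` choices), and by
minimality every red edge contains two distinct members of `J0`, leaving `ℓ² |V|^(k-j-1)`
candidates for red edges; choosing `r` of them costs `(ℓ² |V|^(k-j-1))^r / r!`, which is at most
`(ℓ |V|^(k-j-1))^r e^ℓ` because `ℓ^r / r! ≤ e^ℓ`. -/

namespace DfsCode

variable {α : Type*} [DecidableEq α] (nbr : α → Finset α)

/-- Move words of depth-first explorations standing at `cur` with stack `st`: `some x` steps
forward to a neighbour `x` of `cur` and pushes `cur`, `none` steps back to the top of the stack;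
`L` moves in all, `d` of them forward. -/
def codes : ℕ → ℕ → List α → α → Finset (List (Option α))
  | 0, d, _, _ => if d = 0 then {[]} else ∅
  | L + 1, d, st, cur =>
      (match st with
       | [] => ∅
       | p :: st' => (codes L d st' p).image (List.cons none)) ∪
      (match d with
       | 0 => ∅
       | d' + 1 => (nbr cur).biUnion fun x =>
           (codes L d' (cur :: st) x).image (List.cons (some x)))

variable {nbr}

theorem mem_codes_zero {d : ℕ} {st : List α} {cur : α} {ms : List (Option α)} :
    ms ∈ codes nbr 0 d st cur ↔ d = 0 ∧ ms = [] := by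
  unfold codes; split_ifs <;> simp [*]

theorem mem_codes_succ {L d : ℕ} {st : List α} {cur : α} {ms : List (Option α)} :
    ms ∈ codes nbr (L + 1) d st cur ↔
      (∃ p st', st = p :: st' ∧ ∃ rest ∈ codes nbr L d st' p, none :: rest = ms) ∨
      (∃ d', d = d' + 1 ∧ ∃ x ∈ nbr cur, ∃ rest ∈ codes nbr L d' (cur :: st) x,
        some x :: rest = ms) := by
  rcases st with _ | ⟨p, st'⟩ <;> rcases d with _ | d' <;> simp [codes]

theorem card_codes_le {U : Finset α} {Δ : ℕ} (hU : ∀ x ∈ U, nbr x ⊆ U)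
    (hΔ : ∀ x ∈ U, #(nbr x) ≤ Δ) :
    ∀ L d st cur, cur ∈ U → (∀ p ∈ st, p ∈ U) → #(codes nbr L d st cur) ≤ L.choose d * Δ ^ d := by
  intro L
  induction L with
  | zero => intro d st cur _ _; rcases d with _ | d <;> simp [codes]
  | succ L ih =>
    intro d st cur hcur hst
    have hback : #(match st with
        | [] => ∅
        | p :: st' => (codes nbr L d st' p).image (List.cons none)) ≤ L.choose d * Δ ^ d := by
      rcases st with _ | ⟨p, st'⟩
      · simp
      · exact card_image_le.trans (ih d st' p (hst p (by simp)) fun q hq => hst q (by simp [hq]))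
    simp only [codes]
    refine (card_union_le _ _).trans ?_
    rcases d with _ | d
    · simpa using hback
    · have hforth : #((nbr cur).biUnion fun x =>
          (codes nbr L d (cur :: st) x).image (List.cons (some x))) ≤ Δ * (L.choose d * Δ ^ d) :=
        card_biUnion_le_card_mul _ _ _ (fun x hx => card_image_le.trans
          (ih d _ x (hU cur hcur hx) (by simpa [hcur] using hst))) |>.trans
          (Nat.mul_le_mul_right _ (hΔ cur hcur))
      calc _ ≤ L.choose (d + 1) * Δ ^ (d + 1) + Δ * (L.choose d * Δ ^ d) := add_le_add hback hforth
        _ = (L + 1).choose (d + 1) * Δ ^ (d + 1) := by rw [Nat.choose_succ_succ']; ring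

theorem cons_some_cons_none_mem_codes {L d : ℕ} {st : List α} {cur u : α}
    {ms : List (Option α)} (hms : ms ∈ codes nbr L d st cur) (hu : u ∈ nbr cur) :
    some u :: none :: ms ∈ codes nbr (L + 2) (d + 1) st cur :=
  mem_codes_succ.2 <| .inr
    ⟨d, rfl, u, hu, _, mem_codes_succ.2 <| .inl ⟨cur, st, rfl, ms, hms, rfl⟩, rfl⟩

/-- Insert the detour `some u, none` at the moment the exploration stands at `w`. -/
theorem exists_codes_insert {u w : α} (hu : u ∈ nbr w) :
    ∀ {L d : ℕ} {st : List α} {cur : α} {ms : List (Option α)}, ms ∈ codes nbr L d st cur →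
      w ∈ insert cur ms.reduceOption.toFinset →
      ∃ ms' ∈ codes nbr (L + 2) (d + 1) st cur,
        ms'.reduceOption.toFinset = insert u ms.reduceOption.toFinset := by
  intro L
  induction L with
  | zero =>
    intro d st cur ms hms hw
    obtain ⟨rfl, rfl⟩ := mem_codes_zero.1 hms
    obtain rfl : w = cur := by simpa using hw
    exact ⟨_, cons_some_cons_none_mem_codes hms hu, by simp⟩
  | succ L ih =>
    intro d st cur ms hms hw
    rcases mem_insert.1 hw with rfl | hw
    · exact ⟨_, cons_some_cons_none_mem_codes hms hu, by simp⟩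
    rcases mem_codes_succ.1 hms with
      ⟨p, st', rfl, rest, hrest, rfl⟩ | ⟨d', rfl, x, hx, rest, hrest, rfl⟩
    · obtain ⟨rest', hrest', hvis⟩ := ih hrest (mem_insert_of_mem (by simpa using hw))
      exact ⟨none :: rest', mem_codes_succ.2 <| .inl ⟨p, st', rfl, rest', hrest', rfl⟩,
        by simpa using hvis⟩
    · obtain ⟨rest', hrest', hvis⟩ := ih hrest (by simpa using hw)
      refine ⟨some x :: rest',
        mem_codes_succ.2 <| .inr ⟨d' + 1, rfl, x, hx, rest', hrest', rfl⟩, ?_⟩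
      simp [hvis, insert_comm]

def Explorable (nbr : α → Finset α) (x₀ : α) (T : Finset α) : Prop :=
  ∃ ms ∈ codes nbr (2 * (#T - 1)) (#T - 1) [] x₀, insert x₀ ms.reduceOption.toFinset = T

theorem Explorable.root_mem {x₀ : α} {T : Finset α} (hT : Explorable nbr x₀ T) : x₀ ∈ T := by
  obtain ⟨ms, -, rfl⟩ := hT
  exact mem_insert_self _ _

theorem Explorable.insert_nbr {x₀ u w : α} {T : Finset α} (hT : Explorable nbr x₀ T) (hw : w ∈ T)
    (hu : u ∈ nbr w) (huT : u ∉ T) : Explorable nbr x₀ (insert u T) := by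
  have hcard : #(insert u T) - 1 = #T - 1 + 1 := by
    have := card_pos.2 ⟨x₀, hT.root_mem⟩
    rw [card_insert_of_notMem huT]
    omega
  obtain ⟨ms, hms, rfl⟩ := hT
  obtain ⟨ms', hms', hvis⟩ := exists_codes_insert hu hms hw
  refine ⟨ms', ?_, by rw [hvis, insert_comm]⟩
  rwa [hcard, Nat.mul_succ]

end DfsCode

section Reachability

variable {α : Type*} [DecidableEq α] {nbr : α → Finset α}

def IsReachableWithin (nbr : α → Finset α) (x₀ : α) (S : Finset α) : Prop :=
  ∀ y ∈ S, Relation.ReflTransGen (fun a c => c ∈ S ∧ c ∈ nbr a) x₀ y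

theorem exists_nbr_mem_sdiff_of_reflTransGen {S T : Finset α} {x₀ y : α} (hx₀ : x₀ ∈ T)
    (h : Relation.ReflTransGen (fun a c => c ∈ S ∧ c ∈ nbr a) x₀ y) (hy : y ∉ T) :
    ∃ w ∈ T, ∃ u ∈ S \ T, u ∈ nbr w := by
  induction h with
  | refl => exact absurd hx₀ hy
  | @tail b c _ hbc ih =>
    by_cases hb : b ∈ T
    · exact ⟨b, hb, c, mem_sdiff.2 ⟨hbc.1, hy⟩, hbc.2⟩
    · exact ih hb

theorem explorable_of_isReachableWithin {x₀ : α} {S : Finset α} (hx₀ : x₀ ∈ S)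
    (hS : IsReachableWithin nbr x₀ S) : DfsCode.Explorable nbr x₀ S := by
  suffices grow : ∀ m (T : Finset α), T ⊆ S → #S ≤ #T + m → DfsCode.Explorable nbr x₀ T →
      DfsCode.Explorable nbr x₀ S from
    grow #S {x₀} (by simpa using hx₀) (by simp) ⟨[], by simp [DfsCode.codes], by simp⟩
  intro m
  induction m with
  | zero =>
    intro T hTS hcard hT
    rwa [eq_of_subset_of_card_le hTS (by omega)] at hT
  | succ m ih =>
    intro T hTS hcard hT
    by_cases hST : S ⊆ T
    · rwa [hTS.antisymm hST] at hT
    obtain ⟨y, hyS, hyT⟩ := not_subset.1 hST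
    obtain ⟨w, hwT, u, hu, huw⟩ :=
      exists_nbr_mem_sdiff_of_reflTransGen hT.root_mem (hS y hyS) hyT
    obtain ⟨huS, huT⟩ := mem_sdiff.1 hu
    exact ih (insert u T) (insert_subset huS hTS) (by rw [card_insert_of_notMem huT]; omega)
      (hT.insert_nbr hwT huw huT)

open scoped Classical in
theorem card_filter_isReachableWithin_le {U : Finset α} {Δ : ℕ} (hU : ∀ x ∈ U, nbr x ⊆ U)
    (hΔ : ∀ x ∈ U, #(nbr x) ≤ Δ) {x₀ : α} (hx₀ : x₀ ∈ U) (b : ℕ) :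
    #{S ∈ U.powersetCard (b + 1) | x₀ ∈ S ∧ IsReachableWithin nbr x₀ S} ≤
      (2 * b).choose b * Δ ^ b := by
  have hsub : {S ∈ U.powersetCard (b + 1) | x₀ ∈ S ∧ IsReachableWithin nbr x₀ S} ⊆
      (DfsCode.codes nbr (2 * b) b [] x₀).image (fun ms => insert x₀ ms.reduceOption.toFinset) := by
    intro S hS
    obtain ⟨hSU, hx₀S, hreach⟩ := mem_filter.1 hS
    obtain ⟨ms, hms, rfl⟩ := explorable_of_isReachableWithin hx₀S hreach
    rw [(mem_powersetCard.1 hSU).2, Nat.add_sub_cancel] at hms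
    exact mem_image_of_mem _ hms
  exact (card_le_card hsub).trans <| card_image_le.trans <|
    DfsCode.card_codes_le hU hΔ _ _ _ _ hx₀ (by simp)

end Reachability

section Traversability

variable {V : Type*} [DecidableEq V] {J0 E : Finset (Finset V)}

def SharesEdge (J0 E : Finset (Finset V)) (I I' : Finset V) : Prop :=
  I ∈ J0 ∧ I' ∈ J0 ∧ ∃ e ∈ E, I ⊆ e ∧ I' ⊆ e

theorem trav_iff_reflTransGen_sharesEdge :
    Trav J0 E ↔ ∀ A ∈ J0, ∀ B ∈ J0, Relation.ReflTransGen (SharesEdge J0 E) A B := by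
  constructor
  · intro h A hA B hB
    by_cases hAB : A = B
    · exact hAB ▸ .refl
    obtain ⟨m, es, hmem, hAe, hBe, hsh⟩ := h A hA B hB hAB
    have reach : ∀ i, ∃ X ∈ J0, X ⊆ es i ∧ Relation.ReflTransGen (SharesEdge J0 E) A X := by
      refine Fin.induction ⟨A, hA, hAe, .refl⟩ fun i ⟨X, hX, hXe, hAX⟩ => ?_
      obtain ⟨I, hI, hIe, hIe'⟩ := hsh i
      exact ⟨I, hI, hIe', hAX.tail ⟨hX, hI, _, hmem _, hXe, hIe⟩⟩
    obtain ⟨X, hX, hXe, hAX⟩ := reach (Fin.last m)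
    exact hAX.tail ⟨hX, hB, _, hmem _, hXe, hBe⟩
  · intro h A hA B hB hAB
    have hreach := h A hA B hB
    refine Or.resolve_left ?_ hAB
    clear hA hAB
    induction hreach using Relation.ReflTransGen.head_induction_on with
    | refl => exact .inl rfl
    | head hAX _ ih =>
      obtain ⟨-, hX, g, hg, hAg, hXg⟩ := hAX
      rcases ih with rfl | ⟨m, es, hmem, hXe, hBe, hsh⟩
      · exact .inr ⟨0, fun _ => g, fun _ => hg, hAg, hXg, fun i => i.elim0⟩
      · refine .inr ⟨m + 1, Fin.cons g es, Fin.cases hg hmem, hAg, by simpa using hBe, ?_⟩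
        refine Fin.cases ⟨_, hX, hXg, hXe⟩ fun i => ?_
        simpa [← Fin.succ_castSucc] using hsh i

theorem reflTransGen_sharesEdge_erase {e : Finset V}
    (he : ∀ I ∈ J0, ∀ I' ∈ J0, I ⊆ e → I' ⊆ e → I = I') {A B : Finset V}
    (h : Relation.ReflTransGen (SharesEdge J0 E) A B) :
    Relation.ReflTransGen (SharesEdge J0 (E.erase e)) A B := by
  induction h with
  | refl => exact .refl
  | tail _ hbc ih =>
    obtain ⟨hb, hc, g, hg, hbg, hcg⟩ := hbc
    by_cases hge : g = e
    · subst hge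
      rwa [← he _ hb _ hc hbg hcg]
    · exact ih.tail ⟨hb, hc, g, mem_erase.2 ⟨hge, hg⟩, hbg, hcg⟩

theorem Trav.erase (hT : Trav J0 E) {e : Finset V}
    (he : ∀ I ∈ J0, ∀ I' ∈ J0, I ⊆ e → I' ⊆ e → I = I') : Trav J0 (E.erase e) :=
  trav_iff_reflTransGen_sharesEdge.2 fun A hA B hB =>
    reflTransGen_sharesEdge_erase he (trav_iff_reflTransGen_sharesEdge.1 hT A hA B hB)

theorem exists_ne_subset_of_not_trav_erase (hT : Trav J0 E) {e : Finset V}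
    (hmin : ¬ Trav J0 (E.erase e)) : ∃ I ∈ J0, ∃ I' ∈ J0, I ≠ I' ∧ I ⊆ e ∧ I' ⊆ e := by
  by_contra! h
  exact hmin (hT.erase fun I hI I' hI' hIe hI'e => by_contra fun hne => h I hI I' hI' hne hIe hI'e)

theorem Trav.exists_superset (hT : Trav J0 E) (hJ0 : 2 ≤ #J0) {A : Finset V} (hA : A ∈ J0) :
    ∃ e ∈ E, A ⊆ e := by
  obtain ⟨B, hB, hBA⟩ := exists_mem_ne hJ0 A
  rcases (trav_iff_reflTransGen_sharesEdge.1 hT A hA B hB).cases_head with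
    h | ⟨_, ⟨-, -, e, he, hAe, -⟩, -⟩
  · exact absurd h.symm hBA
  · exact ⟨e, he, hAe⟩

theorem isReachableWithin_of_edgeMinimal {nbr : Finset V → Finset (Finset V)}
    (hnbr : ∀ a ∈ E, ∀ c ∈ E, ∀ I ∈ J0, I ⊆ a → I ⊆ c → c ∈ nbr a)
    (hT : Trav J0 E) (hmin : ∀ e ∈ E, ¬ Trav J0 (E.erase e)) {e : Finset V} (he : e ∈ E) :
    IsReachableWithin nbr e E := by
  intro f hf
  obtain ⟨I, hI, -, -, -, hIe, -⟩ := exists_ne_subset_of_not_trav_erase hT (hmin e he)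
  obtain ⟨I', hI', -, -, -, hI'f, -⟩ := exists_ne_subset_of_not_trav_erase hT (hmin f hf)
  have lift : ∀ X, Relation.ReflTransGen (SharesEdge J0 E) I X → ∃ g ∈ E, X ⊆ g ∧
      Relation.ReflTransGen (fun a c => c ∈ E ∧ c ∈ nbr a) e g := by
    intro X h
    induction h with
    | refl => exact ⟨e, he, hIe, .refl⟩
    | tail _ hbc ih =>
      obtain ⟨hb, -, g', hg', hbg', hcg'⟩ := hbc
      obtain ⟨g, hg, hbg, hreach⟩ := ih
      exact ⟨g', hg', hcg', hreach.tail ⟨hg', hnbr g hg g' hg' _ hb hbg hbg'⟩⟩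
  obtain ⟨g, hg, hI'g, hreach⟩ := lift I' (trav_iff_reflTransGen_sharesEdge.1 hT I hI I' hI')
  exact hreach.tail ⟨hf, hnbr g hg f hf I' hI' hI'g hI'f⟩

end Traversability

section KSets

variable {V : Type*} [DecidableEq V] [Fintype V]

theorem card_filter_powersetCard_univ_superset_le (W : Finset V) (k : ℕ) :
    #{e ∈ powersetCard k univ | W ⊆ e} ≤ Fintype.card V ^ (k - #W) := by
  by_cases hWk : #W ≤ k
  · rw [card_filter_powersetCard_subset W univ k (subset_univ W) hWk, card_univ]
    exact (Nat.choose_le_pow _ _).trans (Nat.pow_le_pow_left (Nat.sub_le _ _) _)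
  · rw [card_eq_zero.2 (filter_eq_empty_iff.2 fun e he hWe =>
      hWk ((card_le_card hWe).trans (mem_powersetCard.1 he).2.le))]
    exact Nat.zero_le _

def kSetsMeeting (k j : ℕ) (e : Finset V) : Finset (Finset V) :=
  {f ∈ powersetCard k univ | j ≤ #(e ∩ f)}

theorem card_kSetsMeeting_le {k j : ℕ} {e : Finset V} (he : #e = k) :
    #(kSetsMeeting k j e) ≤ k.choose j * Fintype.card V ^ (k - j) := by
  have hsub : kSetsMeeting k j e ⊆
      (e.powersetCard j).biUnion fun I => {f ∈ powersetCard k univ | I ⊆ f} := by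
    intro f hf
    obtain ⟨hfk, hj⟩ := mem_filter.1 hf
    obtain ⟨I, hI, hIj⟩ := exists_subset_card_eq hj
    exact mem_biUnion.2 ⟨I, mem_powersetCard.2 ⟨hI.trans inter_subset_left, hIj⟩,
      mem_filter.2 ⟨hfk, hI.trans inter_subset_right⟩⟩
  refine (card_le_card hsub).trans (card_biUnion_le_card_mul _ _ _ fun I hI => ?_) |>.trans_eq
    (by rw [card_powersetCard, he])
  rw [← (mem_powersetCard.1 hI).2]
  exact card_filter_powersetCard_univ_superset_le I k

def kSetsContainingTwo (k : ℕ) (J0 : Finset (Finset V)) : Finset (Finset V) :=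
  {e ∈ powersetCard k univ | ∃ A ∈ J0, ∃ B ∈ J0, A ≠ B ∧ A ⊆ e ∧ B ⊆ e}

theorem card_kSetsContainingTwo_le {J0 : Finset (Finset V)} {k j : ℕ}
    (hJ0 : ∀ A ∈ J0, #A = j) :
    #(kSetsContainingTwo k J0) ≤ #J0 * #J0 * Fintype.card V ^ (k - j - 1) := by
  have hsub : kSetsContainingTwo k J0 ⊆
      J0.offDiag.biUnion fun p => {e ∈ powersetCard k univ | p.1 ∪ p.2 ⊆ e} := by
    intro e he
    obtain ⟨hek, A, hA, B, hB, hAB, hAe, hBe⟩ := mem_filter.1 he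
    exact mem_biUnion.2 ⟨(A, B), mem_offDiag.2 ⟨hA, hB, hAB⟩,
      mem_filter.2 ⟨hek, union_subset hAe hBe⟩⟩
  refine (card_le_card hsub).trans <| (card_biUnion_le_card_mul _ _ _ fun p hp => ?_).trans
    (Nat.mul_le_mul_right _ (by rw [offDiag_card]; exact Nat.sub_le _ _))
  obtain ⟨hA, hB, hAB⟩ := mem_offDiag.1 hp
  have hunion : j + 1 ≤ #(p.1 ∪ p.2) := by
    have hBA : ¬ p.2 ⊆ p.1 := fun h =>
      hAB (eq_of_subset_of_card_le h (by rw [hJ0 _ hA, hJ0 _ hB])).symm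
    have := card_lt_card (Finset.ssubset_iff_subset_ne.2 ⟨subset_union_left (s₁ := p.1),
      fun h => hBA (by rw [h]; exact subset_union_right)⟩)
    rw [hJ0 _ hA] at this
    omega
  have hV : 1 ≤ Fintype.card V := by
    obtain ⟨x, -⟩ := card_pos.1 (show 0 < #(p.1 ∪ p.2) by omega)
    exact Fintype.card_pos_iff.2 ⟨x⟩
  exact (card_filter_powersetCard_univ_superset_le _ k).trans (Nat.pow_le_pow_right hV (by omega))

end KSets

section Counting

variable {V : Type*} [DecidableEq V] [Fintype V] {k j ℓ r b : ℕ}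

theorem ncard_minTravTriples_one_le : (minTravTriples k j V 1 r b).ncard ≤ Fintype.card V ^ j := by
  have hsub : minTravTriples k j V 1 r b ⊆
      (fun A => ({A}, ∅, ∅)) '' ((powersetCard j univ : Finset (Finset V)) : Set (Finset V)) := by
    rintro ⟨J0, E1, E2⟩ ⟨hJ0, -, -, ⟨-, hmin1, hmin2⟩, hJ0card, -, -⟩
    obtain ⟨A, rfl⟩ := card_eq_one.1 hJ0card
    have htrav (E : Finset (Finset V)) : Trav {A} E := fun A' hA' B' hB' hne =>
      absurd ((mem_singleton.1 hA').trans (mem_singleton.1 hB').symm) hne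
    obtain rfl : E1 = ∅ := eq_empty_of_forall_notMem fun e he => hmin1 e he (htrav _)
    obtain rfl : E2 = ∅ := eq_empty_of_forall_notMem fun e he => hmin2 e he (htrav _)
    exact Set.mem_image_of_mem _ (hJ0 (mem_singleton_self A))
  calc (minTravTriples k j V 1 r b).ncard
      ≤ ((fun A => ({A}, ∅, ∅)) '' ((powersetCard j univ : Finset (Finset V)) : Set _)).ncard :=
        Set.ncard_le_ncard hsub ((finite_toSet _).image _)
    _ ≤ #(powersetCard j (univ : Finset V)) :=
        (Set.ncard_image_le (finite_toSet _)).trans_eq (Set.ncard_coe_finset _)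
    _ = (Fintype.card V).choose j := by rw [card_powersetCard, card_univ]
    _ ≤ Fintype.card V ^ j := Nat.choose_le_pow _ _

open scoped Classical in
noncomputable def connectedFamilies (V : Type*) [DecidableEq V] [Fintype V] (k j b : ℕ) :
    Finset (Finset (Finset V)) :=
  {S ∈ (powersetCard k univ).powersetCard b | ∃ e ∈ S, IsReachableWithin (kSetsMeeting k j) e S}

theorem mem_connectedFamilies {S : Finset (Finset V)} :
    S ∈ connectedFamilies V k j b ↔ S ∈ (powersetCard k univ).powersetCard b ∧
      ∃ e ∈ S, IsReachableWithin (kSetsMeeting k j) e S := by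
  classical
  simp [connectedFamilies]

theorem minTravTriples_subset_biUnion (hℓ : 2 ≤ ℓ) :
    minTravTriples k j V ℓ r b ⊆ ((connectedFamilies V k j b).biUnion fun E2 =>
      ((E2.biUnion (powersetCard j)).powersetCard ℓ).biUnion fun J0 =>
        ((kSetsContainingTwo k J0).powersetCard r).image fun E1 => (J0, E1, E2) : Finset _) := by
  rintro ⟨J0, E1, E2⟩ ⟨hJ0, hE1, hE2, ⟨⟨hT1, hT2⟩, hmin1, hmin2⟩, rfl, rfl, rfl⟩
  dsimp only at hℓ
  have hJ0j : ∀ A ∈ J0, #A = j := fun A hA => (mem_powersetCard.1 (hJ0 hA)).2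
  have hnbr : ∀ a ∈ E2, ∀ c ∈ E2, ∀ I ∈ J0, I ⊆ a → I ⊆ c → c ∈ kSetsMeeting k j a :=
    fun a _ c hc I hI hIa hIc =>
      mem_filter.2 ⟨hE2 hc, hJ0j I hI ▸ card_le_card (subset_inter hIa hIc)⟩
  obtain ⟨A, hA⟩ := card_pos.1 (show 0 < #J0 by omega)
  obtain ⟨e, he, -⟩ := hT2.exists_superset hℓ hA
  refine mem_biUnion.2 ⟨E2, ?_, mem_biUnion.2 ⟨J0, ?_, mem_image.2 ⟨E1, ?_, rfl⟩⟩⟩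
  · exact mem_connectedFamilies.2 ⟨mem_powersetCard.2 ⟨hE2, rfl⟩,
      e, he, isReachableWithin_of_edgeMinimal hnbr hT2 hmin2 he⟩
  · refine mem_powersetCard.2 ⟨fun A hA => ?_, rfl⟩
    obtain ⟨e, he, hAe⟩ := hT2.exists_superset hℓ hA
    exact mem_biUnion.2 ⟨e, he, mem_powersetCard.2 ⟨hAe, hJ0j A hA⟩⟩
  · exact mem_powersetCard.2 ⟨fun e he =>
      mem_filter.2 ⟨hE1 he, exists_ne_subset_of_not_trav_erase hT1 (hmin1 e he)⟩, rfl⟩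

theorem ncard_minTravTriples_le (hℓ : 2 ≤ ℓ) :
    (minTravTriples k j V ℓ r b).ncard ≤ #(connectedFamilies V k j b) *
      (2 ^ (b * k.choose j) * (ℓ * ℓ * Fintype.card V ^ (k - j - 1)).choose r) := by
  refine (Set.ncard_coe_finset _ ▸ Set.ncard_le_ncard (minTravTriples_subset_biUnion hℓ)
    (finite_toSet _)).trans (card_biUnion_le_card_mul _ _ _ fun E2 hE2 => ?_)
  have hjsets : #(E2.biUnion (powersetCard j)) ≤ b * k.choose j := by
    obtain ⟨hE2k, hE2b⟩ := mem_powersetCard.1 (mem_connectedFamilies.1 hE2).1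
    refine hE2b ▸ card_biUnion_le_card_mul _ _ _ fun e he => ?_
    rw [card_powersetCard, (mem_powersetCard.1 (hE2k he)).2]
  refine (card_biUnion_le_card_mul _ _ _ fun J0 hJ0 => ?_).trans (Nat.mul_le_mul_right _ ?_)
  · obtain ⟨hJ0sub, rfl⟩ := mem_powersetCard.1 hJ0
    have hJ0j : ∀ A ∈ J0, #A = j := fun A hA => by
      obtain ⟨e, -, hAe⟩ := mem_biUnion.1 (hJ0sub hA)
      exact (mem_powersetCard.1 hAe).2
    refine card_image_le.trans ?_
    rw [card_powersetCard]
    exact Nat.choose_le_choose r (card_kSetsContainingTwo_le hJ0j)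
  · rw [card_powersetCard]
    exact (Nat.choose_le_two_pow _ _).trans (Nat.pow_le_pow_right two_pos hjsets)

theorem connectedFamilies_zero : connectedFamilies V k j 0 = ∅ := by
  ext S
  simp +contextual [mem_connectedFamilies]

theorem ncard_minTravTriples_zero (hℓ : 2 ≤ ℓ) : (minTravTriples k j V ℓ r 0).ncard = 0 := by
  simpa [connectedFamilies_zero] using
    ncard_minTravTriples_le (V := V) (k := k) (j := j) (r := r) (b := 0) hℓ

open scoped Classical in
theorem card_connectedFamilies_succ_le (b : ℕ) :
    #(connectedFamilies V k j (b + 1)) ≤ (Fintype.card V).choose k *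
      ((2 * b).choose b * (k.choose j * Fintype.card V ^ (k - j)) ^ b) := by
  have hsub : connectedFamilies V k j (b + 1) ⊆ (powersetCard k univ).biUnion fun e =>
      {S ∈ (powersetCard k univ).powersetCard (b + 1) |
        e ∈ S ∧ IsReachableWithin (kSetsMeeting k j) e S} := by
    intro S hS
    obtain ⟨hSk, e, he, hreach⟩ := mem_connectedFamilies.1 hS
    exact mem_biUnion.2 ⟨e, (mem_powersetCard.1 hSk).1 he, mem_filter.2 ⟨hSk, he, hreach⟩⟩
  refine (card_le_card hsub).trans <| (card_biUnion_le_card_mul _ _ _ fun e he =>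
    card_filter_isReachableWithin_le (fun _ _ => filter_subset _ _)
      (fun x hx => card_kSetsMeeting_le (mem_powersetCard.1 hx).2) he b).trans_eq ?_
  rw [card_powersetCard, card_univ]

theorem cast_choose_mul_self_mul_le (ℓ X r : ℕ) :
    ((ℓ * ℓ * X).choose r : ℝ) ≤ ((ℓ : ℝ) * X) ^ r * Real.exp ℓ :=
  calc ((ℓ * ℓ * X).choose r : ℝ) ≤ ((ℓ * ℓ * X : ℕ) : ℝ) ^ r / r.factorial :=
        Nat.choose_le_pow_div r _
    _ = ((ℓ : ℝ) * X) ^ r * ((ℓ : ℝ) ^ r / r.factorial) := by push_cast; ring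
    _ ≤ ((ℓ : ℝ) * X) ^ r * Real.exp ℓ := by
        gcongr
        exact Real.pow_div_factorial_le_exp _ (Nat.cast_nonneg _) r

end Counting

theorem cast_ncard_minTravTriples_succ_le {V : Type*} [DecidableEq V] [Fintype V] {k j ℓ r : ℕ}
    (hjk : j ≤ k) (hℓ : 2 ≤ ℓ) (b : ℕ) :
    ((minTravTriples k j V ℓ r (b + 1)).ncard : ℝ) ≤ (Fintype.card V : ℝ) ^ j *
      ((4 * k.choose j * 2 ^ k.choose j) ^ b * 2 ^ k.choose j * Real.exp ℓ) *
        ((Fintype.card V : ℝ) ^ (k - j)) ^ (b + 1) *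
          ((ℓ : ℝ) * (Fintype.card V : ℝ) ^ (k - j - 1)) ^ r := by
  set q := k.choose j
  set n := Fintype.card V
  have hcount := (ncard_minTravTriples_le (V := V) (r := r) hℓ).trans
    (Nat.mul_le_mul_right _ (card_connectedFamilies_succ_le (k := k) (j := j) b))
  calc ((minTravTriples k j V ℓ r (b + 1)).ncard : ℝ)
      ≤ (n.choose k : ℝ) * ((2 * b).choose b * (q * n ^ (k - j)) ^ b) *
          (2 ^ ((b + 1) * q) * (ℓ * ℓ * n ^ (k - j - 1)).choose r) := by exact_mod_cast hcount
    _ ≤ (n ^ j * n ^ (k - j)) * (4 ^ b * (q * n ^ (k - j)) ^ b) *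
          ((2 ^ q) ^ (b + 1) * ((ℓ * n ^ (k - j - 1)) ^ r * Real.exp ℓ)) := by
        gcongr
        · rw [← pow_add, Nat.add_sub_cancel' hjk]
          exact_mod_cast Nat.choose_le_pow n k
        · exact_mod_cast (Nat.choose_le_two_pow (2 * b) b).trans_eq (by rw [pow_mul]; norm_num)
        · rw [← pow_mul, mul_comm]
        · exact_mod_cast cast_choose_mul_self_mul_le ℓ (n ^ (k - j - 1)) r
    _ = _ := by ring

theorem four_mul_two_pow_pow_mul_exp_le {q ℓ b : ℕ} (hq : 1 ≤ q) (hℓ : 2 ≤ ℓ) (hb : b + 1 < ℓ) :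
    (4 * q * 2 ^ q : ℝ) ^ b * 2 ^ q * Real.exp ℓ ≤ (4 * q * 2 ^ q * Real.exp 2) ^ (ℓ - 1) := by
  have hq' : (1 : ℝ) ≤ q := by exact_mod_cast hq
  have hbase : (1 : ℝ) ≤ 4 * q * 2 ^ q := by nlinarith [one_le_pow₀ (M₀ := ℝ) (n := q) one_le_two]
  rw [mul_pow _ (Real.exp 2)]
  gcongr
  · calc (4 * q * 2 ^ q : ℝ) ^ b * 2 ^ q ≤ (4 * q * 2 ^ q) ^ b * (4 * q * 2 ^ q) := by
          gcongr; nlinarith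
      _ ≤ (4 * q * 2 ^ q) ^ (ℓ - 1) := by
          rw [← pow_succ]; exact pow_le_pow_right₀ hbase (by omega)
  · have hℓ' : (2 : ℝ) ≤ ℓ := by exact_mod_cast hℓ
    rw [← Real.exp_nat_mul, Nat.cast_sub (by omega)]
    exact Real.exp_le_exp.2 (by push_cast; linarith)

theorem minTravTriples_card_upper_bound_swapped_general (k j : ℕ) (hjk : j ≤ k - 1) :
    ∃ C : ℝ, 0 < C ∧
      ∀ (V : Type) [DecidableEq V] [Fintype V], ∀ ℓ r b : ℕ, r < ℓ → b < ℓ →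
        ((minTravTriples k j V ℓ r b).ncard : ℝ) ≤
          (Fintype.card V : ℝ) ^ j * C ^ (ℓ - 1) *
            ((Fintype.card V : ℝ) ^ (k - j)) ^ b *
            ((ℓ : ℝ) * (Fintype.card V : ℝ) ^ (k - j - 1)) ^ r := by
  set q := k.choose j
  have hq : 1 ≤ q := Nat.choose_pos (by omega)
  refine ⟨4 * q * 2 ^ q * Real.exp 2, by positivity, fun V _ _ ℓ r b _ hb => ?_⟩
  obtain rfl | hℓ : ℓ = 1 ∨ 2 ≤ ℓ := by omega
  · obtain ⟨rfl, rfl⟩ : r = 0 ∧ b = 0 := by omega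
    simpa using (Nat.cast_le (α := ℝ)).2 ncard_minTravTriples_one_le
  obtain _ | b := b
  · rw [ncard_minTravTriples_zero hℓ, Nat.cast_zero]
    positivity
  refine (cast_ncard_minTravTriples_succ_le (by omega) hℓ b).trans ?_
  gcongr
  exact four_mul_two_pow_pow_mul_exp_le hq hℓ hb

/-- **Remark (colours exchanged).** Let `1 ≤ j ≤ k−1`.  There is a constant `C = C(k,j) > 0`
such that for every finite set `V` and all integers `ℓ > r ≥ 0`, `ℓ > b ≥ 0`, the number of
edge-minimal traversable triples on `V` of size `ℓ` with `r` red and `b` blue edges also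
satisfies `|T_{ℓ,r,b}| ≤ |V|^j · C^{ℓ−1} · (|V|^{k−j})^b · (ℓ·|V|^{k−j−1})^r`. -/
theorem minTravTriples_card_upper_bound_swapped (k j : ℕ) (hj : 1 ≤ j) (hjk : j ≤ k - 1) :
    ∃ C : ℝ, 0 < C ∧
      ∀ (V : Type) [DecidableEq V] [Fintype V], ∀ ℓ r b : ℕ, r < ℓ → b < ℓ →
        ((minTravTriples k j V ℓ r b).ncard : ℝ) ≤
          (Fintype.card V : ℝ) ^ j * C ^ (ℓ - 1) *
            ((Fintype.card V : ℝ) ^ (k - j)) ^ b *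
            ((ℓ : ℝ) * (Fintype.card V : ℝ) ^ (k - j - 1)) ^ r :=
  minTravTriples_card_upper_bound_swapped_general k j hjk
end
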